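/- arXiv:1007.0076 — 3 statements merged into one kernel-verified Lean document; each statement's English description precedes it below -/
import Mathlib

section
/- Let Q be an n×n Hermitian matrix such that det(Q + H) ≥ 0 for every positive semidefinite Hermitian n×n matrix H. Then Q is positive semidefinite. -/
/-!
If `A` had a negative eigenvalue `λₖ`, take `H` diagonal in an orthonormal eigenbasis of `A`,
zero on the `k`-th eigenvector and `1 + |λᵢ|` on the others. Then `A + H` has the eigenvalues
`λₖ < 0` and `λᵢ + 1 + |λᵢ| > 0` for `i ≠ k`, so `det (A + H) < 0`.
-/

open scoped ComplexOrder

open Matrix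

theorem prod_add_ite_one_add_abs_neg {ι : Type*} [Fintype ι] [DecidableEq ι]
    (μ : ι → ℝ) {k : ι} (hk : μ k < 0) :
    ∏ i, (μ i + if i = k then 0 else 1 + |μ i|) < 0 := by
  rw [← Finset.prod_erase_mul _ _ (Finset.mem_univ k), if_pos rfl, add_zero]
  refine mul_neg_of_pos_of_neg (Finset.prod_pos fun i hi => ?_) hk
  rw [if_neg (Finset.ne_of_mem_erase hi)]
  linarith [neg_abs_le (μ i)]

namespace Matrix.IsHermitian

variable {𝕜 n : Type*} [RCLike 𝕜] [Fintype n] [DecidableEq n] {A : Matrix n n 𝕜}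

theorem add_conj_diagonal (hA : A.IsHermitian) (d : n → ℝ) :
    A + (hA.eigenvectorUnitary : Matrix n n 𝕜) * diagonal (RCLike.ofReal ∘ d) *
        star (hA.eigenvectorUnitary : Matrix n n 𝕜) =
      (hA.eigenvectorUnitary : Matrix n n 𝕜) *
        diagonal (fun i => ((hA.eigenvalues i + d i : ℝ) : 𝕜)) *
        star (hA.eigenvectorUnitary : Matrix n n 𝕜) := by
  conv_lhs => enter [1]; rw [hA.spectral_theorem, Unitary.conjStarAlgAut_apply]
  rw [← add_mul, ← mul_add, diagonal_add]
  simp only [Function.comp_apply, RCLike.ofReal_add]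

theorem det_add_conj_diagonal (hA : A.IsHermitian) (d : n → ℝ) :
    (A + (hA.eigenvectorUnitary : Matrix n n 𝕜) * diagonal (RCLike.ofReal ∘ d) *
        star (hA.eigenvectorUnitary : Matrix n n 𝕜)).det =
      ((∏ i, (hA.eigenvalues i + d i) : ℝ) : 𝕜) := by
  rw [hA.add_conj_diagonal, det_mul_right_comm,
    Unitary.mul_star_self_of_mem hA.eigenvectorUnitary.2, one_mul, det_diagonal, RCLike.ofReal_prod]

theorem exists_posSemidef_re_det_add_neg (hA : A.IsHermitian) {k : n}
    (hk : hA.eigenvalues k < 0) :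
    ∃ H : Matrix n n 𝕜, H.PosSemidef ∧ RCLike.re (A + H).det < 0 := by
  set d : n → ℝ := fun i => if i = k then 0 else 1 + |hA.eigenvalues i|
  refine ⟨(hA.eigenvectorUnitary : Matrix n n 𝕜) * diagonal (RCLike.ofReal ∘ d) *
      star (hA.eigenvectorUnitary : Matrix n n 𝕜),
    (posSemidef_diagonal_iff.mpr fun i => ?_).mul_mul_conjTranspose_same _, ?_⟩
  · rw [Function.comp_apply, RCLike.ofReal_nonneg]
    dsimp only [d]
    split_ifs <;> positivity
  · rw [hA.det_add_conj_diagonal, RCLike.ofReal_re]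
    exact prod_add_ite_one_add_abs_neg _ hk

theorem posSemidef_of_forall_re_det_add_nonneg (hA : A.IsHermitian)
    (h : ∀ H : Matrix n n 𝕜, H.PosSemidef → 0 ≤ RCLike.re (A + H).det) : A.PosSemidef := by
  refine hA.posSemidef_iff_eigenvalues_nonneg.mpr fun k => ?_
  by_contra! hk
  obtain ⟨H, hH, hdet⟩ := hA.exists_posSemidef_re_det_add_neg hk
  exact hdet.not_ge (h H hH)

end Matrix.IsHermitian

theorem stmt_0 (n : ℕ) (Q : Matrix (Fin n) (Fin n) ℂ) (hQ : Q.IsHermitian)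
    (h : ∀ H : Matrix (Fin n) (Fin n) ℂ, H.PosSemidef → 0 ≤ ((Q + H).det).re) :
    Q.PosSemidef :=
  hQ.posSemidef_of_forall_re_det_add_nonneg h
end

section
/- For any positive semidefinite Hermitian n×n matrix Q, det(Q)^{1/n} = inf { tr(HQ) : H Hermitian positive definite with det(H) = n^{-n} }. -/
/-! For positive semidefinite `H = B⋆B`, the product `HQ` has the trace and determinant of the
positive semidefinite matrix `BQB⋆`, so AM–GM on the eigenvalues of `BQB⋆` gives
`n det(HQ)^{1/n} ≤ tr(HQ)`, i.e. `det(Q)^{1/n} ≤ tr(HQ)` when `det H = n^{-n}`. Conversely, for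
`P = Q + δ` with `δ > 0` the matrix `H = (det(P)^{1/n}/n) P⁻¹` is admissible and
`tr(HQ) ≤ tr(HP) = det(P)^{1/n}`, which tends to `det(Q)^{1/n}` as `δ → 0⁺`. -/

open scoped ComplexOrder MatrixOrder

namespace Matrix

variable {ι : Type*} [Fintype ι] [DecidableEq ι]

lemma PosSemidef.ofReal_det_re {A : Matrix ι ι ℂ} (hA : A.PosSemidef) :
    (A.det.re : ℂ) = A.det :=
  (Complex.eq_re_of_ofReal_le (r := 0) (by rw [Complex.ofReal_zero]; exact hA.det_nonneg)).symm

lemma PosSemidef.det_re_nonneg {A : Matrix ι ι ℂ} (hA : A.PosSemidef) : 0 ≤ A.det.re :=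
  (Complex.nonneg_iff.mp hA.det_nonneg).1

lemma PosSemidef.card_mul_det_rpow_le_trace [Nonempty ι] {A : Matrix ι ι ℂ}
    (hA : A.PosSemidef) :
    Fintype.card ι * A.det.re ^ ((1 : ℝ) / Fintype.card ι) ≤ A.trace.re := by
  set μ := hA.1.eigenvalues
  have hdet : A.det.re = ∏ i, μ i := by
    simp [hA.1.det_eq_prod_eigenvalues, μ, ← Complex.ofReal_prod]
  have htr : A.trace.re = ∑ i, μ i := by
    simp [hA.1.trace_eq_sum_eigenvalues, μ]
  have hcard : (0 : ℝ) < Fintype.card ι := by exact_mod_cast Fintype.card_pos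
  have amgm := Real.geom_mean_le_arith_mean Finset.univ (fun _ ↦ 1) μ (fun _ _ ↦ zero_le_one)
    (by simpa using hcard) (fun i _ ↦ hA.eigenvalues_nonneg i)
  simp only [Real.rpow_one, Finset.sum_const, Finset.card_univ, nsmul_eq_mul, mul_one,
    one_mul] at amgm
  rw [hdet, htr, one_div, mul_comm, ← le_div_iff₀ hcard]
  exact amgm

lemma PosSemidef.card_mul_det_rpow_le_trace_mul [Nonempty ι] {H Q : Matrix ι ι ℂ}
    (hH : H.PosSemidef) (hQ : Q.PosSemidef) :
    Fintype.card ι * (H * Q).det.re ^ ((1 : ℝ) / Fintype.card ι) ≤ (H * Q).trace.re := by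
  obtain ⟨B, rfl⟩ := CStarAlgebra.nonneg_iff_eq_star_mul_self.mp hH.nonneg
  have hBQB : (B * Q * Bᴴ).PosSemidef := hQ.mul_mul_conjTranspose_same B
  have hdet : (B * Q * Bᴴ).det = (star B * B * Q).det := by
    simp only [det_mul, star_eq_conjTranspose]; ring
  have htr : (B * Q * Bᴴ).trace = (star B * B * Q).trace := by
    rw [trace_mul_cycle, star_eq_conjTranspose]
  simpa only [hdet, htr] using hBQB.card_mul_det_rpow_le_trace

lemma PosDef.exists_det_eq_trace_mul_eq [Nonempty ι] {P : Matrix ι ι ℂ} (hP : P.PosDef) :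
    ∃ H : Matrix ι ι ℂ, H.PosDef ∧
      H.det = ((Fintype.card ι : ℂ) ^ Fintype.card ι)⁻¹ ∧
      (H * P).trace.re = P.det.re ^ ((1 : ℝ) / Fintype.card ι) := by
  set n := Fintype.card ι
  have hn : (0 : ℝ) < n := by exact_mod_cast Fintype.card_pos
  have hdet : 0 < P.det.re := (Complex.pos_iff.mp hP.det_pos).1
  set c : ℝ := P.det.re ^ ((1 : ℝ) / n) / n
  have hc : 0 < c := by positivity
  have hcn : c ^ n = P.det.re / n ^ n := by
    rw [div_pow, ← Real.rpow_natCast (P.det.re ^ _), ← Real.rpow_mul hdet.le, one_div,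
      inv_mul_cancel₀ hn.ne', Real.rpow_one]
  refine ⟨(c : ℂ) • P⁻¹, hP.inv.smul (by exact_mod_cast hc), ?_, ?_⟩
  · rw [det_smul, det_nonsing_inv, Ring.inverse_eq_inv, ← hP.posSemidef.ofReal_det_re,
      ← Complex.ofReal_pow, hcn]
    have : (P.det.re : ℂ) ≠ 0 := by exact_mod_cast hdet.ne'
    push_cast
    field_simp
  · rw [smul_mul, nonsing_inv_mul _ ((isUnit_iff_isUnit_det P).mp hP.isUnit), trace_smul,
      trace_one]
    simp [c, n]

lemma PosSemidef.det_rpow_le_trace_mul [Nonempty ι] {H Q : Matrix ι ι ℂ} (hH : H.PosSemidef)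
    (hQ : Q.PosSemidef) (hHdet : H.det = ((Fintype.card ι : ℂ) ^ Fintype.card ι)⁻¹) :
    Q.det.re ^ ((1 : ℝ) / Fintype.card ι) ≤ (H * Q).trace.re := by
  set n := Fintype.card ι
  have hn : (0 : ℝ) < n := by exact_mod_cast Fintype.card_pos
  have hdet : (H * Q).det.re = ((n : ℝ) ^ n)⁻¹ * Q.det.re := by
    rw [det_mul, hHdet, ← Complex.ofReal_natCast, ← Complex.ofReal_pow, ← Complex.ofReal_inv,
      Complex.re_ofReal_mul]
  have hroot : (((n : ℝ) ^ n)⁻¹) ^ ((1 : ℝ) / n) = (n : ℝ)⁻¹ := by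
    rw [Real.inv_rpow (by positivity), one_div, Real.pow_rpow_inv_natCast hn.le (by positivity)]
  have := hH.card_mul_det_rpow_le_trace_mul hQ
  rwa [hdet, Real.mul_rpow (by positivity) hQ.det_re_nonneg, hroot, ← mul_assoc,
    mul_inv_cancel₀ hn.ne', one_mul] at this

lemma PosSemidef.exists_trace_mul_le_det_add_rpow [Nonempty ι] {Q : Matrix ι ι ℂ}
    (hQ : Q.PosSemidef) {δ : ℝ} (hδ : 0 < δ) :
    ∃ H : Matrix ι ι ℂ, H.PosDef ∧
      H.det = ((Fintype.card ι : ℂ) ^ Fintype.card ι)⁻¹ ∧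
      (H * Q).trace.re ≤ (Q + (δ : ℂ) • 1).det.re ^ ((1 : ℝ) / Fintype.card ι) := by
  have hδ1 : ((δ : ℂ) • (1 : Matrix ι ι ℂ)).PosDef :=
    PosDef.one.smul (by exact_mod_cast hδ)
  obtain ⟨H, hH, hHdet, htr⟩ := (PosDef.posSemidef_add hQ hδ1).exists_det_eq_trace_mul_eq
  refine ⟨H, hH, hHdet, ?_⟩
  have hsplit : (H * (Q + (δ : ℂ) • 1)).trace.re = (H * Q).trace.re + δ * H.trace.re := by
    simp [mul_add, trace_add, trace_smul]
  have hHtr : 0 ≤ H.trace.re := (Complex.nonneg_iff.mp hH.posSemidef.trace_nonneg).1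
  rw [← htr, hsplit]
  nlinarith

open Filter Topology in
theorem PosSemidef.isGLB_trace_mul [Nonempty ι] {Q : Matrix ι ι ℂ} (hQ : Q.PosSemidef) :
    IsGLB { x : ℝ | ∃ H : Matrix ι ι ℂ, H.PosDef ∧
        H.det = ((Fintype.card ι : ℂ) ^ Fintype.card ι)⁻¹ ∧ x = (H * Q).trace.re }
      (Q.det.re ^ ((1 : ℝ) / Fintype.card ι)) := by
  set f : ℝ → ℝ := fun δ ↦ (Q + (δ : ℂ) • 1).det.re ^ ((1 : ℝ) / Fintype.card ι)
  have hf : Tendsto f (𝓝[>] 0) (𝓝 (Q.det.re ^ ((1 : ℝ) / Fintype.card ι))) := by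
    have hcont : Continuous fun δ : ℝ ↦ (Q + (δ : ℂ) • 1).det.re := by fun_prop
    simpa [f] using ((hcont.continuousAt (x := 0)).rpow_const (Or.inr (by positivity))).mono_left
      nhdsWithin_le_nhds
  refine ⟨?_, fun b hb ↦ ge_of_tendsto hf ?_⟩
  · rintro _ ⟨H, hH, hHdet, rfl⟩
    exact hH.posSemidef.det_rpow_le_trace_mul hQ hHdet
  · filter_upwards [self_mem_nhdsWithin] with δ hδ
    obtain ⟨H, hH, hHdet, hle⟩ := hQ.exists_trace_mul_le_det_add_rpow hδ
    exact (hb ⟨H, hH, hHdet, rfl⟩).trans hle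

end Matrix

theorem stmt_1 (n : ℕ) (hn : 0 < n) (Q : Matrix (Fin n) (Fin n) ℂ) (hQ : Q.PosSemidef) :
    (Q.det.re) ^ ((1 : ℝ) / n) =
      sInf { x : ℝ | ∃ H : Matrix (Fin n) (Fin n) ℂ, H.PosDef ∧
        H.det = (((n : ℂ)) ^ (n : ℕ))⁻¹ ∧ x = ((H * Q).trace).re } := by
  have : Nonempty (Fin n) := ⟨⟨0, hn⟩⟩
  have hglb := hQ.isGLB_trace_mul
  rw [Fintype.card_fin] at hglb
  exact (hglb.csInf_eq hglb.nonempty).symm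
end

section
/- The function A ↦ (det A)^{1/n} is concave on the convex cone of positive semidefinite Hermitian n×n matrices. -/
/-!
Superadditivity `det X ^ (1/n) + det Y ^ (1/n) ≤ det (X + Y) ^ (1/n)` (Minkowski's determinant
inequality) plus homogeneity of `det ^ (1/n)` gives concavity. For Minkowski, a congruence
`X ↦ Tᴴ X T` with `Tᴴ (X + Y) T = 1` rescales all three determinants by the same positive factor,
so one may assume `X + Y = 1`. Then `X` and `1 - X` are diagonalised by the same unitary, with
eigenvalues `μᵢ` and `1 - μᵢ` in `[0, 1]`, and AM-GM gives
`(∏ μᵢ) ^ (1/n) + (∏ (1 - μᵢ)) ^ (1/n) ≤ ∑ μᵢ / n + ∑ (1 - μᵢ) / n = 1`.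
-/

open scoped ComplexOrder
open Matrix Finset

theorem Real.geom_mean_add_geom_mean_one_sub_le_one {ι : Type*} [Fintype ι] [Nonempty ι]
    (μ : ι → ℝ) (h0 : ∀ i, 0 ≤ μ i) (h1 : ∀ i, μ i ≤ 1) :
    (∏ i, μ i) ^ (Fintype.card ι : ℝ)⁻¹ + (∏ i, (1 - μ i)) ^ (Fintype.card ι : ℝ)⁻¹ ≤ 1 := by
  set w : ℝ := (Fintype.card ι : ℝ)⁻¹
  have hw : ∑ _i : ι, w = 1 := by simp [w]
  have amgm : ∀ z : ι → ℝ, (∀ i, 0 ≤ z i) → (∏ i, z i) ^ w ≤ ∑ i, w * z i := fun z hz => by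
    rw [← Real.finsetProd_rpow _ _ fun i _ => hz i]
    exact Real.geom_mean_le_arith_mean_weighted univ (fun _ => w) z (fun _ _ => by positivity) hw
      fun i _ => hz i
  calc _ ≤ ∑ i, w * μ i + ∑ i, w * (1 - μ i) :=
        add_le_add (amgm μ h0) (amgm _ fun i => sub_nonneg.2 (h1 i))
    _ = ∑ _i : ι, w := by
      rw [← sum_add_distrib]
      simp_rw [← mul_add, add_sub_cancel, mul_one]
    _ = 1 := hw

namespace Matrix

variable {n 𝕜 : Type*} [Fintype n] [DecidableEq n] [RCLike 𝕜]

theorem det_conjStarAlgAut {R : Type*} [CommRing R] [StarRing R] (U : unitary (Matrix n n R))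
    (X : Matrix n n R) : (Unitary.conjStarAlgAut R _ U X).det = X.det := by
  rw [Unitary.conjStarAlgAut_apply, det_mul, det_mul, mul_right_comm, ← det_mul,
    Unitary.mul_star_self_of_mem U.2, det_one, one_mul]

lemma PosSemidef.re_det_rpow_add_re_det_one_sub_rpow_le_one [Nonempty n] {M : Matrix n n 𝕜}
    (hM : M.PosSemidef) (hM1 : (1 - M).PosSemidef) :
    RCLike.re M.det ^ (Fintype.card n : ℝ)⁻¹ + RCLike.re (1 - M).det ^ (Fintype.card n : ℝ)⁻¹ ≤
      1 := by
  set μ := hM.1.eigenvalues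
  set U := hM.1.eigenvectorUnitary
  have h1M : 1 - M = Unitary.conjStarAlgAut 𝕜 _ U (diagonal (RCLike.ofReal ∘ (1 - μ))) := by
    conv_lhs => rw [hM.1.spectral_theorem]
    rw [← map_one (Unitary.conjStarAlgAut 𝕜 _ U), ← map_sub, ← diagonal_one, diagonal_sub]
    congr 2; ext i; simp [μ]
  have hμ1 : ∀ i, μ i ≤ 1 := by
    rw [h1M, Unitary.conjStarAlgAut_apply, Unitary.isUnit_coe.posSemidef_star_right_conjugate_iff,
      posSemidef_diagonal_iff] at hM1
    intro i
    simpa only [Function.comp_apply, Pi.sub_apply, Pi.one_apply, RCLike.ofReal_nonneg, sub_nonneg]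
      using hM1 i
  have hdetM : RCLike.re M.det = ∏ i, μ i := by
    rw [hM.1.det_eq_prod_eigenvalues, ← RCLike.ofReal_prod, RCLike.ofReal_re]
  have hdet1M : RCLike.re (1 - M).det = ∏ i, (1 - μ i) := by
    rw [h1M, det_conjStarAlgAut, det_diagonal]
    simp only [Function.comp_apply, ← RCLike.ofReal_prod, RCLike.ofReal_re, Pi.sub_apply,
      Pi.one_apply]
  rw [hdetM, hdet1M]
  exact Real.geom_mean_add_geom_mean_one_sub_le_one μ hM.eigenvalues_nonneg hμ1

lemma PosSemidef.re_det_ofReal_smul_rpow [Nonempty n] {A : Matrix n n 𝕜} (hA : A.PosSemidef)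
    {t : ℝ} (ht : 0 ≤ t) :
    RCLike.re ((t : 𝕜) • A).det ^ (Fintype.card n : ℝ)⁻¹ =
      t * RCLike.re A.det ^ (Fintype.card n : ℝ)⁻¹ := by
  rw [det_smul, ← RCLike.ofReal_pow, RCLike.re_ofReal_mul,
    Real.mul_rpow (pow_nonneg ht _) (RCLike.nonneg_iff.mp hA.det_nonneg).1,
    Real.pow_rpow_inv_natCast ht Fintype.card_ne_zero]

lemma PosSemidef.det_eq_zero_of_det_add_eq_zero {X Y : Matrix n n 𝕜} (hX : X.PosSemidef)
    (hY : Y.PosSemidef) (h : (X + Y).det = 0) : X.det = 0 := by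
  obtain ⟨v, hv, hXYv⟩ := exists_mulVec_eq_zero_iff.mpr h
  have hsum : star v ⬝ᵥ X *ᵥ v + star v ⬝ᵥ Y *ᵥ v = 0 := by
    rw [← dotProduct_add, ← add_mulVec, hXYv, dotProduct_zero]
  have hXv : star v ⬝ᵥ X *ᵥ v = 0 :=
    ((add_eq_zero_iff_of_nonneg (hX.dotProduct_mulVec_nonneg v)
      (hY.dotProduct_mulVec_nonneg v)).mp hsum).1
  exact exists_mulVec_eq_zero_iff.mp ⟨v, hv, (hX.dotProduct_mulVec_zero_iff v).mp hXv⟩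

open scoped MatrixOrder in
lemma PosDef.exists_conjTranspose_mul_mul_eq_one {P : Matrix n n 𝕜} (hP : P.PosDef) :
    ∃ T : Matrix n n 𝕜, Tᴴ * P * T = 1 := by
  set S := CFC.sqrt P
  have hSS : S * S = P := CFC.sqrt_mul_sqrt_self P hP.posSemidef.nonneg
  have hS : S.IsHermitian := (CFC.sqrt_nonneg P).posSemidef.1
  have hSdet : IsUnit S.det := by
    rw [isUnit_iff_ne_zero]
    intro h0
    exact hP.det_pos.ne' (by rw [← hSS, det_mul, h0, zero_mul])
  refine ⟨S⁻¹, ?_⟩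
  rw [conjTranspose_nonsing_inv, hS.eq, ← hSS, ← mul_assoc, nonsing_inv_mul _ hSdet, one_mul,
    mul_nonsing_inv _ hSdet]

theorem PosSemidef.re_det_rpow_add_re_det_rpow_le [Nonempty n] {X Y : Matrix n n 𝕜}
    (hX : X.PosSemidef) (hY : Y.PosSemidef) :
    RCLike.re X.det ^ (Fintype.card n : ℝ)⁻¹ + RCLike.re Y.det ^ (Fintype.card n : ℝ)⁻¹ ≤
      RCLike.re (X + Y).det ^ (Fintype.card n : ℝ)⁻¹ := by
  by_cases hdet : (X + Y).det = 0
  · rw [hdet, hX.det_eq_zero_of_det_add_eq_zero hY hdet,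
      hY.det_eq_zero_of_det_add_eq_zero hX (add_comm X Y ▸ hdet)]
    simp [Real.zero_rpow (inv_ne_zero (Nat.cast_ne_zero.mpr Fintype.card_ne_zero))]
  obtain ⟨T, hT⟩ :=
    ((hX.add hY).posDef_iff_det_ne_zero.mpr hdet).exists_conjTranspose_mul_mul_eq_one
  set M := Tᴴ * X * T
  have hM : M.PosSemidef := hX.conjTranspose_mul_mul_same T
  have h1M : 1 - M = Tᴴ * Y * T := by
    rw [← hT, sub_eq_iff_eq_add', mul_add, add_mul]
  have h1M_psd : (1 - M).PosSemidef := h1M ▸ hY.conjTranspose_mul_mul_same T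
  have hdet_mul : ∀ Z : Matrix n n 𝕜, (X + Y).det * (Tᴴ * Z * T).det = Z.det := fun Z => by
    have hdetT := congrArg det hT
    rw [det_mul, det_mul, det_one] at hdetT
    rw [det_mul, det_mul]
    linear_combination Z.det * hdetT
  have hXY := RCLike.nonneg_iff.mp (hX.add hY).det_nonneg
  have hre (Z : Matrix n n 𝕜) :
      RCLike.re Z.det = RCLike.re (X + Y).det * RCLike.re (Tᴴ * Z * T).det := by
    rw [← hdet_mul Z, RCLike.mul_re, hXY.2, zero_mul, sub_zero]
  have hre_nonneg {Z : Matrix n n 𝕜} (hZ : Z.PosSemidef) : 0 ≤ RCLike.re Z.det :=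
    (RCLike.nonneg_iff.mp hZ.det_nonneg).1
  calc RCLike.re X.det ^ (Fintype.card n : ℝ)⁻¹ + RCLike.re Y.det ^ (Fintype.card n : ℝ)⁻¹
      = RCLike.re (X + Y).det ^ (Fintype.card n : ℝ)⁻¹ *
          (RCLike.re M.det ^ (Fintype.card n : ℝ)⁻¹ +
            RCLike.re (1 - M).det ^ (Fintype.card n : ℝ)⁻¹) := by
        rw [hre X, hre Y, ← h1M, Real.mul_rpow hXY.1 (hre_nonneg hM),
          Real.mul_rpow hXY.1 (hre_nonneg h1M_psd), mul_add]
    _ ≤ RCLike.re (X + Y).det ^ (Fintype.card n : ℝ)⁻¹ * 1 :=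
        mul_le_mul_of_nonneg_left (hM.re_det_rpow_add_re_det_one_sub_rpow_le_one h1M_psd)
          (Real.rpow_nonneg hXY.1 _)
    _ = _ := mul_one _

end Matrix

theorem stmt_2 (n : ℕ) (A B : Matrix (Fin n) (Fin n) ℂ)
    (hA : A.PosSemidef) (hB : B.PosSemidef) (t : ℝ) (ht0 : 0 ≤ t) (ht1 : t ≤ 1) :
    t * (A.det.re) ^ ((1 : ℝ) / n) + (1 - t) * (B.det.re) ^ ((1 : ℝ) / n) ≤
      ((((t : ℂ) • A + ((1 : ℂ) - t) • B).det).re) ^ ((1 : ℝ) / n) := by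
  rcases Nat.eq_zero_or_pos n with rfl | hn
  · simp
  have : Nonempty (Fin n) := Fin.pos_iff_nonempty.mp hn
  have ht1' : 0 ≤ 1 - t := sub_nonneg.mpr ht1
  have h1t : (1 : ℂ) - t = ((1 - t : ℝ) : ℂ) := by push_cast; ring
  have hmink := PosSemidef.re_det_rpow_add_re_det_rpow_le (X := (t : ℂ) • A)
    (Y := ((1 - t : ℝ) : ℂ) • B)
    (hA.smul (Complex.zero_le_real.mpr ht0)) (hB.smul (Complex.zero_le_real.mpr ht1'))
  -- the `RCLike` coercion `ℝ → ℂ` is `Complex.ofReal` only up to unfolding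
  rw [← RCLike.ofReal_eq_complex_ofReal, hA.re_det_ofReal_smul_rpow ht0,
    hB.re_det_ofReal_smul_rpow ht1', RCLike.ofReal_eq_complex_ofReal, ← h1t] at hmink
  simpa only [Fintype.card_fin, one_div, RCLike.re_to_complex] using hmink
end
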